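/- arXiv:2101.08732 — 4 statements merged into one kernel-verified Lean document; each statement's English description precedes it below -/
import Mathlib

section
/- Let X be an n×d real matrix, and consider the alternating updates θ^(k) = θ^(k-1) − η Xᵀ(X θ^(k-1) − t^(k-1)) and t^(k) = α t^(k-1) + (1−α) X θ^(k), with α ∈ (0,1) and learning rate η > 0. Then the residual satisfies X θ^(k) − t^(k) = α(I − η X Xᵀ)(X θ^(k-1) − t^(k-1)) for all k ≥ 1. -/
open Matrix

/-- The residual recurrence of self-adaptive training for linear regression. -/
theorem residual_recurrence
    {n d : ℕ} (X : Matrix (Fin n) (Fin d) ℝ)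
    (θ : ℕ → Fin d → ℝ) (t : ℕ → Fin n → ℝ)
    (α η : ℝ) (hα : 0 < α ∧ α < 1) (hη : 0 < η)
    (hθ : ∀ k, θ (k + 1) = θ k - η • (Xᵀ.mulVec (X.mulVec (θ k) - t k)))
    (ht : ∀ k, t (k + 1) = α • t k + (1 - α) • X.mulVec (θ (k + 1))) :
    ∀ k, X.mulVec (θ (k + 1)) - t (k + 1)
      = α • ((1 - η • (X * Xᵀ)).mulVec (X.mulVec (θ k) - t k)) := by
  intro k
  rw [ht, hθ]
  simp only [Matrix.mulVec_sub, Matrix.mulVec_smul, Matrix.sub_mulVec,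
    Matrix.one_mulVec, Matrix.smul_mulVec, ← Matrix.mulVec_mulVec]
  module
end

section
/- Proposition 1: Consider linear regression with data matrix X ∈ ℝ^{n×d} and the self-adaptive training updates θ^(k) = θ^(k-1) − η Xᵀ(X θ^(k-1) − t^(k-1)) and t^(k) = α t^(k-1) + (1−α) X θ^(k), where α ∈ (0,1). Let d_max be the maximal eigenvalue of X Xᵀ. If 0 < η < (α+1)/(α d_max), then lim_{k→∞} ‖X θ^(k) − t^(k)‖₂² = 0. -/
open Matrix Filter

private lemma sat_quad_bounds {n : ℕ} (M : Matrix (Fin n) (Fin n) ℝ) (hM : M.IsHermitian)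
    (dmax : ℝ)
    (h0 : ∀ i, 0 ≤ hM.eigenvalues i) (h1 : ∀ i, hM.eigenvalues i ≤ dmax) (v : Fin n → ℝ) :
    0 ≤ v ⬝ᵥ (M *ᵥ v) ∧ v ⬝ᵥ (M *ᵥ v) ≤ dmax * (v ⬝ᵥ v) ∧
      (M *ᵥ v) ⬝ᵥ (M *ᵥ v) ≤ dmax * (v ⬝ᵥ (M *ᵥ v)) := by
  classical
  set U : Matrix (Fin n) (Fin n) ℝ := (hM.eigenvectorUnitary : Matrix (Fin n) (Fin n) ℝ) with hU
  set w : Fin n → ℝ := star U *ᵥ v with hw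
  have hUU : U * star U = 1 := (Matrix.mem_unitaryGroup_iff).mp hM.eigenvectorUnitary.2
  have hUU' : star U * U = 1 := (Matrix.mem_unitaryGroup_iff').mp hM.eigenvectorUnitary.2
  have hv : v = U *ᵥ w := by rw [hw, mulVec_mulVec, hUU, one_mulVec]
  have hMv : M *ᵥ v = U *ᵥ (fun i => hM.eigenvalues i * w i) := by
    have hMeq : M = U * diagonal hM.eigenvalues * star U := by
      convert hM.spectral_theorem using 2
      simp [Unitary.conjStarAlgAut_apply, hU]
    have hd : (diagonal hM.eigenvalues) *ᵥ w = fun i => hM.eigenvalues i * w i := by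
      ext i; simp [mulVec_diagonal]
    calc M *ᵥ v = (U * diagonal hM.eigenvalues * star U) *ᵥ v := by rw [← hMeq]
      _ = U *ᵥ (diagonal hM.eigenvalues *ᵥ (star U *ᵥ v)) := by
          rw [mulVec_mulVec, mulVec_mulVec]
      _ = U *ᵥ (fun i => hM.eigenvalues i * w i) := by rw [← hw, hd]
  have key : ∀ x y : Fin n → ℝ, (U *ᵥ x) ⬝ᵥ (U *ᵥ y) = x ⬝ᵥ y := by
    intro x y
    rw [dotProduct_mulVec, ← mulVec_transpose, mulVec_mulVec]
    have : Uᵀ = star U := rfl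
    rw [this, hUU', one_mulVec]
  have e1 : v ⬝ᵥ (M *ᵥ v) = ∑ i, hM.eigenvalues i * w i ^ 2 := by
    rw [hMv]
    conv_lhs => rw [hv]
    rw [key]
    simp only [dotProduct]
    exact Finset.sum_congr rfl fun i _ => by ring
  have e2 : v ⬝ᵥ v = ∑ i, w i ^ 2 := by
    conv_lhs => rw [hv]
    rw [key]; simp [dotProduct, pow_two]
  have e3 : (M *ᵥ v) ⬝ᵥ (M *ᵥ v) = ∑ i, hM.eigenvalues i ^ 2 * w i ^ 2 := by
    rw [hMv, key]
    simp only [dotProduct]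
    exact Finset.sum_congr rfl fun i _ => by ring
  refine ⟨?_, ?_, ?_⟩
  · rw [e1]; exact Finset.sum_nonneg fun i _ => mul_nonneg (h0 i) (sq_nonneg _)
  · rw [e1, e2, Finset.mul_sum]
    exact Finset.sum_le_sum fun i _ => mul_le_mul_of_nonneg_right (h1 i) (sq_nonneg _)
  · rw [e1, e3, Finset.mul_sum]
    refine Finset.sum_le_sum fun i _ => ?_
    rw [pow_two, mul_assoc, ← mul_assoc, mul_assoc]
    exact mul_le_mul_of_nonneg_right (h1 i) (mul_nonneg (h0 i) (sq_nonneg _))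

/-- Proposition 1: under the learning-rate condition, the squared ℓ₂ residual of
self-adaptive training for linear regression converges to zero. -/
theorem sat_linear_regression_converges
    {n d : ℕ} (X : Matrix (Fin n) (Fin d) ℝ)
    (θ : ℕ → Fin d → ℝ) (t : ℕ → Fin n → ℝ)
    (α η dmax : ℝ) (hα : 0 < α ∧ α < 1)
    (hdmax : IsGreatest (spectrum ℝ (X * Xᵀ)) dmax) (hdpos : 0 < dmax)
    (hη : 0 < η ∧ η < (α + 1) / (α * dmax))
    (hθ : ∀ k, θ (k + 1) = θ k - η • (Xᵀ.mulVec (X.mulVec (θ k) - t k)))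
    (ht : ∀ k, t (k + 1) = α • t k + (1 - α) • X.mulVec (θ (k + 1))) :
    Tendsto (fun k => ∑ i, (X.mulVec (θ k) i - t k i) ^ 2) atTop (nhds 0) := by
  classical
  obtain ⟨hα0, hα1⟩ := hα
  obtain ⟨hη0, hη1⟩ := hη
  set M : Matrix (Fin n) (Fin n) ℝ := X * Xᵀ with hMdef
  have hpsd : M.PosSemidef := by
    have := Matrix.posSemidef_self_mul_conjTranspose X
    simpa [hMdef] using this
  have hM : M.IsHermitian := hpsd.isHermitian
  have h0 : ∀ i, 0 ≤ hM.eigenvalues i := hpsd.eigenvalues_nonneg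
  have h1 : ∀ i, hM.eigenvalues i ≤ dmax := fun i =>
    hdmax.2 (hM.eigenvalues_mem_spectrum_real i)
  -- residual
  set r : ℕ → Fin n → ℝ := fun k => X.mulVec (θ k) - t k with hr
  have hrec : ∀ k, r (k + 1) = α • (r k - η • (M *ᵥ r k)) := by
    intro k
    have hXθ : X.mulVec (θ (k + 1)) = X.mulVec (θ k) - η • (M *ᵥ r k) := by
      rw [hθ k, mulVec_sub, mulVec_smul, mulVec_mulVec, ← hMdef, hr]
    rw [hr]
    simp only [ht k, hXθ]
    ext i
    simp only [Pi.sub_apply, Pi.add_apply, Pi.smul_apply, smul_eq_mul]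
    ring
  -- squared norm as dot product
  have hsum : ∀ k, (∑ i, (X.mulVec (θ k) i - t k i) ^ 2) = r k ⬝ᵥ r k := by
    intro k
    simp [hr, dotProduct, pow_two]
  set f : ℕ → ℝ := fun k => r k ⬝ᵥ r k with hf
  have hfnonneg : ∀ k, 0 ≤ f k := fun k =>
    Finset.sum_nonneg fun i _ => mul_self_nonneg _
  -- contraction constant
  set c : ℝ := max (α ^ 2) ((α * (η * dmax - 1)) ^ 2) with hc
  have hc0 : 0 ≤ c := le_trans (sq_nonneg α) (le_max_left _ _)
  have hαηd : α * η * dmax < α + 1 := by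
    have h := (lt_div_iff₀ (by positivity : (0:ℝ) < α * dmax)).mp hη1
    nlinarith
  have hc1 : c < 1 := by
    apply max_lt
    · nlinarith
    · have hub : α * (η * dmax - 1) < 1 := by nlinarith
      have hlb : -1 < α * (η * dmax - 1) := by nlinarith [mul_pos hη0 hdpos]
      nlinarith
  -- one-step contraction
  have hstep : ∀ k, f (k + 1) ≤ c * f k := by
    intro k
    obtain ⟨q0, q1, q2⟩ := sat_quad_bounds M hM dmax h0 h1 (r k)
    have hexp : f (k + 1) = α ^ 2 * (r k ⬝ᵥ r k - 2 * η * (r k ⬝ᵥ (M *ᵥ r k))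
        + η ^ 2 * ((M *ᵥ r k) ⬝ᵥ (M *ᵥ r k))) := by
      rw [hf]
      simp only [hrec k, dotProduct, Pi.smul_apply, Pi.sub_apply, smul_eq_mul]
      rw [Finset.sum_congr rfl (fun i (_ : i ∈ Finset.univ) =>
        (by ring : α * (r k i - η * (M *ᵥ r k) i) * (α * (r k i - η * (M *ᵥ r k) i))
          = α ^ 2 * (r k i * r k i) - 2 * η * α ^ 2 * (r k i * (M *ᵥ r k) i)
            + η ^ 2 * α ^ 2 * ((M *ᵥ r k) i * (M *ᵥ r k) i))),
        Finset.sum_add_distrib, Finset.sum_sub_distrib,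
        ← Finset.mul_sum, ← Finset.mul_sum, ← Finset.mul_sum]
      ring
    rw [hexp]
    have hN : f k = r k ⬝ᵥ r k := rfl
    rcases le_or_gt (η * dmax) 2 with hcase | hcase
    · have : α ^ 2 * (r k ⬝ᵥ r k - 2 * η * (r k ⬝ᵥ (M *ᵥ r k))
          + η ^ 2 * ((M *ᵥ r k) ⬝ᵥ (M *ᵥ r k))) ≤ α ^ 2 * (r k ⬝ᵥ r k) := by
        nlinarith [mul_le_mul_of_nonneg_left q2 (by positivity : (0:ℝ) ≤ α ^ 2 * η ^ 2),
          mul_nonneg (mul_nonneg (sq_nonneg α) (mul_nonneg hη0.le q0))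
            (sub_nonneg.mpr hcase)]
      calc _ ≤ α ^ 2 * (r k ⬝ᵥ r k) := this
        _ ≤ c * f k := by
            rw [hN]
            exact mul_le_mul_of_nonneg_right (le_max_left _ _) (hfnonneg k)
    · have hq1' : r k ⬝ᵥ (M *ᵥ r k) ≤ dmax * (r k ⬝ᵥ r k) := q1
      have : α ^ 2 * (r k ⬝ᵥ r k - 2 * η * (r k ⬝ᵥ (M *ᵥ r k))
          + η ^ 2 * ((M *ᵥ r k) ⬝ᵥ (M *ᵥ r k)))
          ≤ (α * (η * dmax - 1)) ^ 2 * (r k ⬝ᵥ r k) := by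
        have hco : (0:ℝ) ≤ α ^ 2 * η * (η * dmax - 2) := by
          have : (0:ℝ) ≤ η * dmax - 2 := by linarith
          positivity
        nlinarith [mul_le_mul_of_nonneg_left q2 (by positivity : (0:ℝ) ≤ α ^ 2 * η ^ 2),
          mul_le_mul_of_nonneg_left q1 hco]
      calc _ ≤ (α * (η * dmax - 1)) ^ 2 * (r k ⬝ᵥ r k) := this
        _ ≤ c * f k := by
            rw [hN]
            exact mul_le_mul_of_nonneg_right (le_max_right _ _) (hfnonneg k)
  -- geometric bound
  have hgeo : ∀ k, f k ≤ c ^ k * f 0 := by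
    intro k
    induction k with
    | zero => simp
    | succ k ih =>
        calc f (k + 1) ≤ c * f k := hstep k
          _ ≤ c * (c ^ k * f 0) := mul_le_mul_of_nonneg_left ih hc0
          _ = c ^ (k + 1) * f 0 := by ring
  have htend : Tendsto (fun k => c ^ k * f 0) atTop (nhds 0) := by
    have := (tendsto_pow_atTop_nhds_zero_of_lt_one hc0 hc1).mul_const (f 0)
    simpa using this
  have : Tendsto f atTop (nhds 0) :=
    squeeze_zero hfnonneg hgeo htend
  have hfunext : (fun k => ∑ i, (X.mulVec (θ k) i - t k i) ^ 2) = f := by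
    funext k; exact hsum k
  rw [hfunext]
  exact this
end

section
/- Let D = diag(d₁,…,dₙ) with each dⱼ ≥ 0, let α ∈ (0,1) and η > 0 with η < (α+1)/(α · maxⱼ dⱼ). Define sequences r^(k), s^(k) ∈ ℝ^n by r^(k) = [αI + (1−α)ηD] r^(k-1) + (1−α)(I − ηD) s^(k-1) and s^(k) = ηD r^(k-1) + (I − ηD) s^(k-1). Then s^(k) − r^(k) = [α(I − ηD)]^k (s^(0) − r^(0)), and consequently s^(k) − r^(k) → 0 as k → ∞. -/
open Matrix Filter

/-- Diagonalized form of the self-adaptive training dynamics: the difference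
`s^(k) − r^(k)` has the closed form `[α(I − ηD)]^k (s^(0) − r^(0))` and tends to 0. -/
theorem diagonal_dynamics
    {n : ℕ} (d : Fin n → ℝ) (hd : ∀ j, 0 ≤ d j)
    (α η dmax : ℝ) (hα : 0 < α ∧ α < 1)
    (hdmax : IsGreatest (Set.range d) dmax)
    (hη : 0 < η ∧ η < (α + 1) / (α * dmax))
    (r s : ℕ → Fin n → ℝ)
    (hr : ∀ k, r (k + 1)
      = (α • (1 : Matrix (Fin n) (Fin n) ℝ)
          + (1 - α) • (η • Matrix.diagonal d)).mulVec (r k)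
        + ((1 - α) • ((1 : Matrix (Fin n) (Fin n) ℝ)
          - η • Matrix.diagonal d)).mulVec (s k))
    (hs : ∀ k, s (k + 1)
      = (η • Matrix.diagonal d).mulVec (r k)
        + ((1 : Matrix (Fin n) (Fin n) ℝ) - η • Matrix.diagonal d).mulVec (s k)) :
    (∀ k, s k - r k
      = ((α • ((1 : Matrix (Fin n) (Fin n) ℝ) - η • Matrix.diagonal d)) ^ k).mulVec
          (s 0 - r 0))
    ∧ Tendsto (fun k => s k - r k) atTop (nhds 0) := by
  obtain ⟨hα0, hα1⟩ := hα
  obtain ⟨hη0, hη1⟩ := hη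
  set Dm : Matrix (Fin n) (Fin n) ℝ := η • Matrix.diagonal d with hDm
  set M : Matrix (Fin n) (Fin n) ℝ := α • ((1 : Matrix (Fin n) (Fin n) ℝ) - Dm) with hM
  -- step lemma
  have step : ∀ k, s (k + 1) - r (k + 1) = M.mulVec (s k - r k) := by
    intro k
    rw [hs k, hr k, hM]
    simp only [Matrix.mulVec_sub, Matrix.add_mulVec, Matrix.sub_mulVec,
      Matrix.smul_mulVec, Matrix.one_mulVec]
    module
  have closed : ∀ k, s k - r k = (M ^ k).mulVec (s 0 - r 0) := by
    intro k
    induction k with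
    | zero => simp
    | succ k ih =>
        rw [step k, ih, pow_succ', ← Matrix.mulVec_mulVec]
  refine ⟨closed, ?_⟩
  -- M is diagonal
  have hMdiag : M = Matrix.diagonal (fun j => α * (1 - η * d j)) := by
    rw [hM, hDm]
    ext i j
    by_cases h : i = j <;>
      simp [Matrix.diagonal, Matrix.one_apply, h, mul_comm]
  -- each diagonal entry has absolute value < 1
  have habs : ∀ j, |α * (1 - η * d j)| < 1 := by
    intro j
    have hdj : d j ≤ dmax := hdmax.2 ⟨j, rfl⟩
    have hdmax0 : 0 ≤ dmax := le_trans (hd j) hdj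
    rw [abs_lt]
    constructor
    · -- -1 < α * (1 - η * d j), i.e. α * η * d j < α + 1
      have key : α * (η * d j) < α + 1 := by
        rcases eq_or_lt_of_le hdmax0 with h0 | h0
        · have : d j = 0 := le_antisymm (h0 ▸ hdj) (hd j)
          rw [this]; nlinarith
        · have hpos : 0 < α * dmax := mul_pos hα0 h0
          have hηlt : η * (α * dmax) < α + 1 := (lt_div_iff₀ hpos).mp hη1
          nlinarith [mul_le_mul_of_nonneg_left hdj (mul_nonneg hα0.le hη0.le)]
      nlinarith
    · -- α * (1 - η * d j) < 1
      have h1 : 1 - η * d j ≤ 1 := by nlinarith [mul_nonneg (le_of_lt hη0) (hd j)]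
      nlinarith
  have hzero : Tendsto (fun k => (M ^ k).mulVec (s 0 - r 0)) atTop
      (nhds (0 : Fin n → ℝ)) := by
    rw [tendsto_pi_nhds]
    intro j
    have : ∀ k, (M ^ k).mulVec (s 0 - r 0) j
        = (α * (1 - η * d j)) ^ k * (s 0 - r 0) j := by
      intro k
      rw [hMdiag, Matrix.diagonal_pow, Matrix.mulVec_diagonal, Pi.pow_apply]
    simp only [this, Pi.zero_apply]
    have := (tendsto_pow_atTop_nhds_zero_of_abs_lt_one (habs j)).mul_const
      ((s 0 - r 0) j)
    simpa using this
  refine hzero.congr' ?_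
  filter_upwards with k using (closed k).symm
end

section
/- Let X ∈ ℝ^{n×d} with X Xᵀ invertible (maximal eigenvalue d_max, minimal eigenvalue d_min > 0), α ∈ (0,1), and 0 < η < (α+1)/(α d_max). Then for the self-adaptive training iterates, ‖X θ^(k) − t^(k)‖₂ ≤ ρ^k ‖X θ^(0) − t^(0)‖₂ where ρ = max(|α(1 − η d_max)|, |α(1 − η d_min)|) < 1. -/
open Matrix



lemma sq_norm_pi {m : ℕ} (w : EuclideanSpace ℝ (Fin m)) : ‖w‖^2 = ∑ i, w i ^ 2 := by
  rw [EuclideanSpace.norm_eq, Real.sq_sqrt (by positivity)]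
  simp [sq_abs]

lemma parseval {m : ℕ} (b : OrthonormalBasis (Fin m) ℝ (EuclideanSpace ℝ (Fin m)))
    (x : EuclideanSpace ℝ (Fin m)) : ‖x‖^2 = ∑ j, (b.repr x j)^2 := by
  rw [← b.repr.norm_map x, sq_norm_pi]

lemma spec_bound {m : ℕ} (A M : Matrix (Fin m) (Fin m) ℝ) (hA : A.IsHermitian)
    (hM : Mᵀ = M) (f : ℝ → ℝ)
    (hMA : ∀ j, M *ᵥ ⇑(hA.eigenvectorBasis j) = f (hA.eigenvalues j) • ⇑(hA.eigenvectorBasis j))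
    (ρ : ℝ) (hf : ∀ lam ∈ spectrum ℝ A, |f lam| ≤ ρ)
    (v : Fin m → ℝ) : ∑ i, ((M *ᵥ v) i) ^ 2 ≤ ρ^2 * ∑ i, (v i) ^ 2 := by
  set b := hA.eigenvectorBasis with hb
  set v' : EuclideanSpace ℝ (Fin m) := WithLp.toLp 2 v with hv'
  set w' : EuclideanSpace ℝ (Fin m) := WithLp.toLp 2 (M *ᵥ v) with hw'
  have key : ∀ j, b.repr w' j = f (hA.eigenvalues j) * b.repr v' j := by
    intro j
    rw [b.repr_apply_apply, b.repr_apply_apply]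
    simp only [PiLp.inner_apply, RCLike.inner_apply, starRingEnd_apply, star_trivial]
    have : ∑ i, w' i * (b j) i = (⇑(b j)) ⬝ᵥ (M *ᵥ v) :=
      (Finset.sum_congr rfl (fun i _ => mul_comm _ _)).trans rfl
    rw [this, dotProduct_mulVec, ← mulVec_transpose, hM, hMA j]
    simp [dotProduct, smul_eq_mul, Finset.mul_sum, mul_assoc]
    exact Finset.sum_congr rfl (fun i _ => by rw [mul_comm (v'.ofLp i)])
  have h1 : ∑ i, ((M *ᵥ v) i) ^ 2 = ‖w'‖^2 := (sq_norm_pi w').symm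
  have h2 : ∑ i, (v i) ^ 2 = ‖v'‖^2 := (sq_norm_pi v').symm
  rw [h1, h2, parseval b w', parseval b v', Finset.mul_sum]
  apply Finset.sum_le_sum
  intro j _
  rw [key j, mul_pow]
  have hle : (f (hA.eigenvalues j))^2 ≤ ρ^2 := by
    have := hf _ (hA.eigenvalues_mem_spectrum_real j)
    have := abs_nonneg (f (hA.eigenvalues j))
    nlinarith [sq_abs (f (hA.eigenvalues j))]
  nlinarith [sq_nonneg (b.repr v' j)]

/-- Quantitative geometric convergence rate for the self-adaptive training
residual when `XXᵀ` is invertible. -/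
theorem sat_geometric_rate
    {n d : ℕ} (X : Matrix (Fin n) (Fin d) ℝ)
    (hinv : IsUnit (X * Xᵀ))
    (θ : ℕ → Fin d → ℝ) (t : ℕ → Fin n → ℝ)
    (α η dmax dmin : ℝ) (hα : 0 < α ∧ α < 1)
    (hdmax : IsGreatest (spectrum ℝ (X * Xᵀ)) dmax)
    (hdmin : IsLeast (spectrum ℝ (X * Xᵀ)) dmin)
    (hdminpos : 0 < dmin)
    (hη : 0 < η ∧ η < (α + 1) / (α * dmax))
    (hθ : ∀ k, θ (k + 1) = θ k - η • (Xᵀ.mulVec (X.mulVec (θ k) - t k)))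
    (ht : ∀ k, t (k + 1) = α • t k + (1 - α) • X.mulVec (θ (k + 1))) :
    max |α * (1 - η * dmax)| |α * (1 - η * dmin)| < 1
    ∧ ∀ k, Real.sqrt (∑ i, (X.mulVec (θ k) i - t k i) ^ 2)
        ≤ (max |α * (1 - η * dmax)| |α * (1 - η * dmin)|) ^ k
          * Real.sqrt (∑ i, (X.mulVec (θ 0) i - t 0 i) ^ 2) := by
  obtain ⟨hα0, hα1⟩ := hα
  obtain ⟨hη0, hη1⟩ := hη
  set A := X * Xᵀ with hAdef
  have hA : A.IsHermitian := by
    rw [hAdef, ← conjTranspose_eq_transpose_of_trivial X]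
    exact isHermitian_mul_conjTranspose_self X
  have hAT : Aᵀ = A := by
    have := hA.eq; rwa [conjTranspose_eq_transpose_of_trivial] at this
  have hdd : dmin ≤ dmax := hdmax.2 hdmin.1
  have hdmaxpos : 0 < dmax := lt_of_lt_of_le hdminpos hdd
  have hαd : 0 < α * dmax := by positivity
  have hη1' : η * (α * dmax) < α + 1 := (lt_div_iff₀ hαd).mp hη1
  set ρ := max |α * (1 - η * dmax)| |α * (1 - η * dmin)| with hρdef
  have hρ0 : 0 ≤ ρ := le_trans (abs_nonneg _) (le_max_left _ _)
  -- endpoints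
  have ha1 : -1 < α * (1 - η * dmax) := by nlinarith
  have hab : α * (1 - η * dmax) ≤ α * (1 - η * dmin) := by
    nlinarith [mul_nonneg (mul_pos hα0 hη0).le (sub_nonneg.mpr hdd)]
  have hb1 : α * (1 - η * dmin) < 1 := by
    nlinarith [mul_pos (mul_pos hα0 hη0) hdminpos]
  have hρ1 : ρ < 1 := by
    rw [hρdef]
    apply max_lt <;> rw [abs_lt] <;> constructor <;> linarith
  -- bound on f over spectrum
  set f : ℝ → ℝ := fun lam => α * (1 - η * lam) with hfdef
  have hf : ∀ lam ∈ spectrum ℝ A, |f lam| ≤ ρ := by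
    intro lam hlam
    have h1 : lam ≤ dmax := hdmax.2 hlam
    have h2 : dmin ≤ lam := hdmin.2 hlam
    have hub : α * (1 - η * lam) ≤ α * (1 - η * dmin) := by
      nlinarith [mul_nonneg (mul_pos hα0 hη0).le (sub_nonneg.mpr h2)]
    have hlb : α * (1 - η * dmax) ≤ α * (1 - η * lam) := by
      nlinarith [mul_nonneg (mul_pos hα0 hη0).le (sub_nonneg.mpr h1)]
    have hmax1 : |α * (1 - η * dmax)| ≤ ρ := le_max_left _ _
    have hmax2 : |α * (1 - η * dmin)| ≤ ρ := le_max_right _ _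
    have hn := neg_abs_le (α * (1 - η * dmax))
    have hp := le_abs_self (α * (1 - η * dmin))
    rw [abs_le]
    constructor
    · simp only [hfdef]; linarith
    · simp only [hfdef]; linarith
  set M : Matrix (Fin n) (Fin n) ℝ := α • ((1 : Matrix (Fin n) (Fin n) ℝ) - η • A) with hMdef
  have hMT : Mᵀ = M := by
    rw [hMdef, transpose_smul, transpose_sub, transpose_one, transpose_smul, hAT]
  have hMv : ∀ v : Fin n → ℝ, M *ᵥ v = α • v - (α * η) • (A *ᵥ v) := by
    intro v
    rw [hMdef]
    rw [smul_mulVec, sub_mulVec, one_mulVec, smul_mulVec, smul_sub, smul_smul]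
  have hMA : ∀ j, M *ᵥ ⇑(hA.eigenvectorBasis j)
      = f (hA.eigenvalues j) • ⇑(hA.eigenvectorBasis j) := by
    intro j
    rw [hMv, hA.mulVec_eigenvectorBasis]
    funext i
    simp only [Pi.sub_apply, Pi.smul_apply, smul_eq_mul, hfdef]
    ring
  set r : ℕ → Fin n → ℝ := fun k => X *ᵥ θ k - t k with hrdef
  have hrec : ∀ k, r (k + 1) = M *ᵥ r k := by
    intro k
    rw [hMv]
    funext i
    simp only [hrdef, ht k, hθ k, hAdef, ← mulVec_mulVec, Matrix.mulVec_sub, Matrix.mulVec_smul,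
      Pi.sub_apply, Pi.add_apply, Pi.smul_apply, smul_eq_mul]
    ring
  have hstep : ∀ k, Real.sqrt (∑ i, (r (k + 1) i) ^ 2) ≤ ρ * Real.sqrt (∑ i, (r k i) ^ 2) := by
    intro k
    rw [hrec k]
    have := spec_bound A M hA hMT f hMA ρ hf (r k)
    calc Real.sqrt (∑ i, ((M *ᵥ r k) i) ^ 2) ≤ Real.sqrt (ρ ^ 2 * ∑ i, (r k i) ^ 2) :=
          Real.sqrt_le_sqrt this
      _ = ρ * Real.sqrt (∑ i, (r k i) ^ 2) := by
          rw [Real.sqrt_mul (by positivity), Real.sqrt_sq hρ0]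
  refine ⟨hρ1, ?_⟩
  intro k
  have : ∀ k, Real.sqrt (∑ i, (r k i) ^ 2) ≤ ρ ^ k * Real.sqrt (∑ i, (r 0 i) ^ 2) := by
    intro k
    induction k with
    | zero => simp
    | succ k ih =>
      calc Real.sqrt (∑ i, (r (k + 1) i) ^ 2) ≤ ρ * Real.sqrt (∑ i, (r k i) ^ 2) := hstep k
        _ ≤ ρ * (ρ ^ k * Real.sqrt (∑ i, (r 0 i) ^ 2)) := by
            exact mul_le_mul_of_nonneg_left ih hρ0
        _ = ρ ^ (k + 1) * Real.sqrt (∑ i, (r 0 i) ^ 2) := by ring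
  exact this k
end
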